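/- arXiv:2605.19543 — 9 statements merged into one kernel-verified Lean document; each statement's English description precedes it below -/
import Mathlib

section
/- Let X and Y be finite undirected graphs and let {E_{x,y}} be a quantum homomorphism from X to Y (orthogonal projections on a nonzero finite-dimensional Hilbert space satisfying completeness, same-vertex orthogonality, and the edge-zero condition). If there is a walk of length ℓ from x to x' in X but no walk of length ℓ from y to y' in Y, then E_{x,y} · E_{x',y'} = 0. -/
/-- A walk of length `ℓ` from `x` to `x'` in a simple graph: a sequence of
vertices with consecutive vertices adjacent. -/
def HasWalk {α : Type*} (X : SimpleGraph α) (x x' : α) (ℓ : ℕ) : Prop :=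
  ∃ w : ℕ → α, w 0 = x ∧ w ℓ = x' ∧ ∀ i < ℓ, X.Adj (w i) (w (i + 1))

/-- **Walk lemma (undirected).** If `{E x y}` is a quantum homomorphism from a
finite graph `X` to a finite graph `Y` (a family of orthogonal projections on a
nonzero finite-dimensional complex Hilbert space satisfying completeness,
same-vertex orthogonality, and the edge-zero condition), and there is a walk of
length `ℓ` from `x` to `x'` in `X` but no walk of length `ℓ` from `y` to `y'`
in `Y`, then `E x y * E x' y' = 0`. -/
theorem walk_lemma_undirected
    {α β : Type*} [Fintype α] [Fintype β]
    {V : Type*} [NormedAddCommGroup V] [InnerProductSpace ℂ V]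
    [FiniteDimensional ℂ V] [Nontrivial V]
    (X : SimpleGraph α) (Y : SimpleGraph β)
    (E : α → β → Module.End ℂ V)
    (hsa : ∀ x y, LinearMap.IsSymmetric (E x y))
    (hidem : ∀ x y, E x y * E x y = E x y)
    (hsum : ∀ x, ∑ y, E x y = 1)
    (horth : ∀ x y y', y ≠ y' → E x y * E x y' = 0)
    (hedge : ∀ x x' y y', X.Adj x x' → ¬ Y.Adj y y' → E x y * E x' y' = 0)
    (x x' : α) (y y' : β) (ℓ : ℕ)
    (hX : HasWalk X x x' ℓ) (hY : ¬ HasWalk Y y y' ℓ) :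
    E x y * E x' y' = 0 := by
  induction ℓ generalizing x y with
  | zero =>
    obtain ⟨w, hw0, hwl, -⟩ := hX
    have hxx : x = x' := by rw [← hw0, hwl]
    have hyy : y ≠ y' := by
      rintro rfl
      exact hY ⟨fun _ => y, rfl, rfl, fun i h => absurd h (Nat.not_lt_zero i)⟩
    rw [hxx]
    exact horth x' y y' hyy
  | succ n ih =>
    obtain ⟨w, hw0, hwl, hadj⟩ := hX
    have hX' : HasWalk X (w 1) x' n :=
      ⟨fun i => w (i + 1), rfl, hwl, fun i hi => hadj (i + 1) (by omega)⟩
    have hadj0 : X.Adj x (w 1) := hw0 ▸ hadj 0 (Nat.succ_pos n)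
    have key : ∀ y'' : β, E x y * E (w 1) y'' * E x' y' = 0 := by
      intro y''
      by_cases hA : Y.Adj y y''
      · have hnw : ¬ HasWalk Y y'' y' n := by
          rintro ⟨v, hv0, hvl, hvadj⟩
          apply hY
          refine ⟨fun i => if i = 0 then y else v (i - 1), by simp, by simp [hvl], ?_⟩
          intro i hi
          match i with
          | 0 => simpa [hv0] using hA
          | j + 1 =>
            have : j < n := by omega
            simpa using hvadj j this
        rw [mul_assoc, ih (w 1) y'' hX' hnw, mul_zero]
      · rw [hedge x (w 1) y y'' hadj0 hA, zero_mul]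
    calc E x y * E x' y'
        = E x y * (∑ y'', E (w 1) y'') * E x' y' := by rw [hsum, mul_one]
      _ = ∑ y'', E x y * E (w 1) y'' * E x' y' := by
          rw [Finset.mul_sum, Finset.sum_mul]
      _ = 0 := Finset.sum_eq_zero fun y'' _ => key y''
end

section
/- Let X and Y be finite directed graphs and let {E_{x,y}} be a quantum homomorphism from X to Y. If there is a directed walk of length ℓ from x to x' in X but no directed walk of length ℓ from y to y' in Y, then E_{x,y} · E_{x',y'} = 0. -/
/-- A directed walk of length `ℓ` from `x` to `x'` along the arc relation `A`. -/
def HasDiWalk {α : Type*} (A : α → α → Prop) (x x' : α) (ℓ : ℕ) : Prop :=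
  ∃ w : ℕ → α, w 0 = x ∧ w ℓ = x' ∧ ∀ i < ℓ, A (w i) (w (i + 1))

/-- **Walk lemma (directed).** If `{E x y}` is a quantum homomorphism between
finite directed graphs `X = (α, A)` and `Y = (β, B)` (orthogonal projections on
a nonzero finite-dimensional complex Hilbert space satisfying completeness,
same-vertex orthogonality, and the arc-zero condition), and there is a directed
walk of length `ℓ` from `x` to `x'` in `X` but no directed walk of length `ℓ`
from `y` to `y'` in `Y`, then `E x y * E x' y' = 0`. -/
theorem walk_lemma_directed
    {α β : Type*} [Fintype α] [Fintype β]
    {V : Type*} [NormedAddCommGroup V] [InnerProductSpace ℂ V]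
    [FiniteDimensional ℂ V] [Nontrivial V]
    (A : α → α → Prop) (B : β → β → Prop)
    (E : α → β → Module.End ℂ V)
    (hsa : ∀ x y, LinearMap.IsSymmetric (E x y))
    (hidem : ∀ x y, E x y * E x y = E x y)
    (hsum : ∀ x, ∑ y, E x y = 1)
    (horth : ∀ x y y', y ≠ y' → E x y * E x y' = 0)
    (harc : ∀ x x' y y', A x x' → ¬ B y y' → E x y * E x' y' = 0)
    (x x' : α) (y y' : β) (ℓ : ℕ)
    (hX : HasDiWalk A x x' ℓ) (hY : ¬ HasDiWalk B y y' ℓ) :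
    E x y * E x' y' = 0 := by
  induction ℓ generalizing x y with
  | zero =>
    obtain ⟨w, h0, h1, -⟩ := hX
    have hxx : x = x' := h0 ▸ h1
    have hyy : y ≠ y' := by
      rintro rfl
      exact hY ⟨fun _ => y, rfl, rfl, fun i hi => absurd hi (Nat.not_lt_zero i)⟩
    rw [← hxx]
    exact horth x y y' hyy
  | succ ℓ ih =>
    obtain ⟨w, h0, h1, harcw⟩ := hX
    have hA1 : A x (w 1) := by rw [← h0]; exact harcw 0 (Nat.succ_pos ℓ)
    have hXs : HasDiWalk A (w 1) x' ℓ :=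
      ⟨fun i => w (i + 1), rfl, h1, fun i hi => harcw (i + 1) (by omega)⟩
    have key : ∀ y₁ : β, E x y * (E (w 1) y₁ * E x' y') = 0 := by
      intro y₁
      by_cases hB : B y y₁
      · have hYs : ¬ HasDiWalk B y₁ y' ℓ := by
          rintro ⟨v, v0, v1, varc⟩
          apply hY
          refine ⟨fun i => if i = 0 then y else v (i - 1), rfl, by simp [v1], ?_⟩
          intro i hi
          match i with
          | 0 => simpa [v0] using hB
          | j + 1 => simpa using varc j (by omega)
        rw [ih _ _ hXs hYs, mul_zero]
      · rw [← mul_assoc, harc x (w 1) y y₁ hA1 hB, zero_mul]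
    calc E x y * E x' y' = E x y * (∑ y₁, E (w 1) y₁) * E x' y' := by rw [hsum, mul_one]
    _ = ∑ y₁, E x y * (E (w 1) y₁ * E x' y') := by
        rw [Finset.mul_sum, Finset.sum_mul]; simp [mul_assoc]
    _ = 0 := by simp [key]
end

section
/- For integers m, n ≥ 2, there exists a quantum homomorphism from the directed cycle C⃗_n to the directed cycle C⃗_m if and only if m divides n. -/
/-!
A classical graph homomorphism is a quantum homomorphism with one-dimensional projections, and
`x ↦ x mod m` is a homomorphism `C⃗_n → C⃗_m` when `m ∣ n`.

Conversely, since every vertex of `C⃗_m` has exactly one out-neighbour, completeness of the row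
`E (x + 1) ·` forces `E x y * E (x + 1) (y + 1) = E x y`. Iterating `n` times brings `x` back to
itself, giving `E x y * E x (y + n) = E x y`; if `m ∤ n` then `y + n ≠ y`, so orthogonality makes
every `E x y` vanish, contradicting `∑ y, E x y = 1`.
-/

/-- The arc relation of the clockwise directed cycle on `Fin n`
(vertices `0, …, n-1`, arcs `i → i+1` mod `n`). -/
def CycleArc (n : ℕ) (i j : Fin n) : Prop := (j : ℕ) = ((i : ℕ) + 1) % n

/-- Existence of a quantum homomorphism between finite directed graphs
`(α, A)` and `(β, B)`: a family of orthogonal projections (self-adjoint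
idempotents) on a nonzero finite-dimensional complex Hilbert space satisfying
completeness, same-vertex orthogonality, and the arc-zero condition. -/
def QHomDi {α β : Type*} [Fintype β] (A : α → α → Prop) (B : β → β → Prop) : Prop :=
  ∃ (d : ℕ), 0 < d ∧
    ∃ E : α → β → Module.End ℂ (EuclideanSpace ℂ (Fin d)),
      (∀ x y, LinearMap.IsSymmetric (E x y)) ∧
      (∀ x y, E x y * E x y = E x y) ∧
      (∀ x, ∑ y, E x y = 1) ∧
      (∀ x y y', y ≠ y' → E x y * E x y' = 0) ∧
      (∀ x x' y y', A x x' → ¬ B y y' → E x y * E x' y' = 0)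

open Fin.NatCast

theorem QHomDi.of_hom {α β : Type*} [Fintype β] {A : α → α → Prop} {B : β → β → Prop}
    (f : α → β) (hf : ∀ x x', A x x' → B (f x) (f x')) : QHomDi A B := by
  classical
  refine ⟨1, one_pos, fun x y => if f x = y then 1 else 0, ?_, ?_, ?_, ?_, ?_⟩ <;> dsimp only
  · intro x y
    split_ifs
    exacts [LinearMap.IsSymmetric.id, LinearMap.IsSymmetric.zero]
  · intro x y
    split_ifs <;> simp
  · intro x
    simp [Finset.sum_ite_eq]
  · intro x y y' hne
    split_ifs with hy hy' <;> simp_all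
  · intro x x' y y' hA hB
    split_ifs with hy hy'
    · subst hy hy'
      exact absurd (hf x x' hA) hB
    all_goals simp

theorem mul_eq_self_of_sum_eq_one {R β : Type*} [Ring R] [Fintype β] {F : β → R}
    (hF : ∑ y, F y = 1) {P : R} {y₀ : β} (h : ∀ y ≠ y₀, P * F y = 0) : P * F y₀ = P :=
  calc P * F y₀ = ∑ y, P * F y :=
        (Finset.sum_eq_single y₀ (fun y _ hy => h y hy) (by simp)).symm
    _ = P := by rw [← Finset.mul_sum, hF, mul_one]

theorem cycleArc_iff {n : ℕ} [NeZero n] {i j : Fin n} : CycleArc n i j ↔ j = i + 1 := by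
  rw [CycleArc, Fin.ext_iff, Fin.val_add, Fin.val_one', Nat.add_mod_mod]

theorem CycleArc.natCast_of_dvd {m n : ℕ} [NeZero m] (h : m ∣ n) (i j : Fin n)
    (hij : CycleArc n i j) : CycleArc m (i : ℕ) (j : ℕ) := by
  rw [CycleArc, Fin.val_natCast, Fin.val_natCast, hij, Nat.mod_mod_of_dvd _ h, Nat.mod_add_mod]

section QHomRelations

variable {R : Type*} [Ring R] {m n : ℕ} [NeZero m] [NeZero n] {E : Fin n → Fin m → R}

theorem CycleArc.qhom_mul_succ (hsum : ∀ x, ∑ y, E x y = 1)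
    (harc : ∀ x x' y y', CycleArc n x x' → ¬ CycleArc m y y' → E x y * E x' y' = 0)
    (x : Fin n) (y : Fin m) : E x y * E (x + 1) (y + 1) = E x y :=
  mul_eq_self_of_sum_eq_one (hsum (x + 1)) fun _ hy' =>
    harc _ _ _ _ (cycleArc_iff.2 rfl) (mt cycleArc_iff.1 hy')

theorem CycleArc.qhom_mul_add_natCast (hidem : ∀ x y, E x y * E x y = E x y)
    (hsum : ∀ x, ∑ y, E x y = 1)
    (harc : ∀ x x' y y', CycleArc n x x' → ¬ CycleArc m y y' → E x y * E x' y' = 0)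
    (k : ℕ) (x : Fin n) (y : Fin m) : E x y * E (x + k) (y + k) = E x y := by
  induction k with
  | zero => simpa using hidem x y
  | succ k ih =>
    calc E x y * E (x + (k + 1 : ℕ)) (y + (k + 1 : ℕ))
        = E x y * E (x + k) (y + k) * E (x + k + 1) (y + k + 1) := by
          rw [ih]; push_cast; simp only [add_assoc]
      _ = E x y := by rw [mul_assoc, CycleArc.qhom_mul_succ hsum harc, ih]

theorem CycleArc.dvd_of_qhom_relations [Nontrivial R] (hidem : ∀ x y, E x y * E x y = E x y)
    (hsum : ∀ x, ∑ y, E x y = 1) (horth : ∀ x y y', y ≠ y' → E x y * E x y' = 0)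
    (harc : ∀ x x' y y', CycleArc n x x' → ¬ CycleArc m y y' → E x y * E x' y' = 0) :
    m ∣ n := by
  by_contra hmn
  have hvanish : ∀ x y, E x y = 0 := fun x y => by
    have hloop := CycleArc.qhom_mul_add_natCast hidem hsum harc n x y
    rw [Fin.natCast_self, add_zero] at hloop
    have hshift : y ≠ y + n := fun h =>
      hmn (Fin.natCast_eq_zero.1 (left_eq_add.1 h))
    rw [← hloop, horth x y _ hshift]
  simpa [hvanish] using hsum 0

end QHomRelations

/-- For `m, n ≥ 2`, there is a quantum homomorphism from the directed cycle
`C⃗_n` to the directed cycle `C⃗_m` if and only if `m` divides `n`. -/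
theorem cycle_qhom_iff_dvd (m n : ℕ) (hm : 2 ≤ m) (hn : 2 ≤ n) :
    QHomDi (CycleArc n) (CycleArc m) ↔ m ∣ n := by
  have : NeZero m := ⟨by omega⟩
  have : NeZero n := ⟨by omega⟩
  constructor
  · rintro ⟨d, hd, E, -, hidem, hsum, horth, harc⟩
    have : NeZero d := ⟨hd.ne'⟩
    exact CycleArc.dvd_of_qhom_relations hidem hsum horth harc
  · intro hmn
    exact QHomDi.of_hom (fun x : Fin n => ((x : ℕ) : Fin m)) (CycleArc.natCast_of_dvd hmn)
end

section
/- The quantum homomorphism relation is transitive: if X →_q Y and Y →_q Z for finite graphs X, Y, Z, then X →_q Z. A witnessing family on the tensor product of the two Hilbert spaces is given by G_{x,z} = Σ_y E_{x,y} ⊗ F_{y,z}, which satisfies the three quantum homomorphism axioms. -/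
open Kronecker

/-- **Transitivity of the quantum homomorphism relation.** If `{E x y}` is a
quantum homomorphism `X →_q Y` on a Hilbert space of dimension `d₁` and
`{F y z}` is a quantum homomorphism `Y →_q Z` on a Hilbert space of dimension
`d₂` (both given by orthogonal projections, here Hermitian idempotent matrices,
satisfying completeness, same-vertex orthogonality and the edge-zero
condition), then the family `G x z = Σ_y (E x y) ⊗ (F y z)` on the tensor
product of the two Hilbert spaces is a quantum homomorphism `X →_q Z`;
in particular `X →_q Y` and `Y →_q Z` imply `X →_q Z`. -/
theorem quantum_hom_trans
    {α β γ : Type*} [Fintype α] [Fintype β] [Fintype γ]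
    (X : SimpleGraph α) (Y : SimpleGraph β) (Z : SimpleGraph γ)
    (d₁ d₂ : ℕ) (hd₁ : 0 < d₁) (hd₂ : 0 < d₂)
    (E : α → β → Matrix (Fin d₁) (Fin d₁) ℂ)
    (F : β → γ → Matrix (Fin d₂) (Fin d₂) ℂ)
    (hEsa : ∀ x y, (E x y).IsHermitian)
    (hEidem : ∀ x y, E x y * E x y = E x y)
    (hEsum : ∀ x, ∑ y, E x y = 1)
    (hEorth : ∀ x y y', y ≠ y' → E x y * E x y' = 0)
    (hEedge : ∀ x x' y y', X.Adj x x' → ¬ Y.Adj y y' → E x y * E x' y' = 0)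
    (hFsa : ∀ y z, (F y z).IsHermitian)
    (hFidem : ∀ y z, F y z * F y z = F y z)
    (hFsum : ∀ y, ∑ z, F y z = 1)
    (hForth : ∀ y z z', z ≠ z' → F y z * F y z' = 0)
    (hFedge : ∀ y y' z z', Y.Adj y y' → ¬ Z.Adj z z' → F y z * F y' z' = 0) :
    let G : α → γ → Matrix (Fin d₁ × Fin d₂) (Fin d₁ × Fin d₂) ℂ :=
      fun x z => ∑ y, (E x y) ⊗ₖ (F y z)
    (∀ x z, (G x z).IsHermitian) ∧
    (∀ x z, G x z * G x z = G x z) ∧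
    (∀ x, ∑ z, G x z = 1) ∧
    (∀ x z z', z ≠ z' → G x z * G x z' = 0) ∧
    (∀ x x' z z', X.Adj x x' → ¬ Z.Adj z z' → G x z * G x' z' = 0) := by
  intro G
  have kronsa : ∀ (A : Matrix (Fin d₁) (Fin d₁) ℂ) (B : Matrix (Fin d₂) (Fin d₂) ℂ),
      A.IsHermitian → B.IsHermitian → (A ⊗ₖ B).IsHermitian := by
    intro A B hA hB
    ext i j
    simp only [Matrix.conjTranspose_apply, Matrix.kroneckerMap_apply, star_mul']
    rw [← Matrix.conjTranspose_apply A, ← Matrix.conjTranspose_apply B, hA.eq, hB.eq]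
  have prodG : ∀ x x' z z',
      G x z * G x' z' = ∑ y, ∑ y', (E x y * E x' y') ⊗ₖ (F y z * F y' z') := by
    intro x x' z z'
    show (∑ y, (E x y) ⊗ₖ (F y z)) * (∑ y', (E x' y') ⊗ₖ (F y' z')) = _
    rw [Finset.sum_mul_sum]
    simp [Matrix.mul_kronecker_mul]
  refine ⟨?_, ?_, ?_, ?_, ?_⟩
  · intro x z
    show Matrix.IsHermitian (∑ y, (E x y) ⊗ₖ (F y z))
    unfold Matrix.IsHermitian
    rw [Matrix.conjTranspose_sum]
    exact Finset.sum_congr rfl fun y _ => (kronsa _ _ (hEsa x y) (hFsa y z)).eq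
  · intro x z
    rw [prodG]
    calc ∑ y, ∑ y', (E x y * E x y') ⊗ₖ (F y z * F y' z)
        = ∑ y, (E x y) ⊗ₖ (F y z) := by
          refine Finset.sum_congr rfl fun y _ => ?_
          rw [Finset.sum_eq_single y]
          · rw [hEidem, hFidem]
          · intro y' _ hy'
            rw [hEorth x y y' (Ne.symm hy'), Matrix.zero_kronecker]
          · simp
      _ = G x z := rfl
  · intro x
    show ∑ z, ∑ y, (E x y) ⊗ₖ (F y z) = 1
    rw [Finset.sum_comm]
    calc ∑ y, ∑ z, (E x y) ⊗ₖ (F y z)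
        = ∑ y, (E x y) ⊗ₖ (1 : Matrix (Fin d₂) (Fin d₂) ℂ) := by
          refine Finset.sum_congr rfl fun y _ => ?_
          rw [← hFsum y]
          ext i j
          simp [Matrix.kroneckerMap_apply, Matrix.sum_apply, Finset.mul_sum]
      _ = (∑ y, E x y) ⊗ₖ (1 : Matrix (Fin d₂) (Fin d₂) ℂ) := by
          ext i j
          simp [Matrix.kroneckerMap_apply, Matrix.sum_apply, Finset.sum_mul]
      _ = 1 := by rw [hEsum, Matrix.one_kronecker_one]
  · intro x z z' hzz'
    rw [prodG]
    refine Finset.sum_eq_zero fun y _ => Finset.sum_eq_zero fun y' _ => ?_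
    by_cases h : y = y'
    · subst h
      rw [hForth y z z' hzz', Matrix.kronecker_zero]
    · rw [hEorth x y y' h, Matrix.zero_kronecker]
  · intro x x' z z' hX hZ
    rw [prodG]
    refine Finset.sum_eq_zero fun y _ => Finset.sum_eq_zero fun y' _ => ?_
    by_cases h : Y.Adj y y'
    · rw [hFedge y y' z z' h hZ, Matrix.kronecker_zero]
    · rw [hEedge x x' y y' hX h, Matrix.zero_kronecker]
end

section
/- Let {E_{x,y}} be a quantum homomorphism X →_q Y where X is weakly connected and Y = Y₁ ⊔ ... ⊔ Y_t. For each x and i define P_i^x = Σ_{y ∈ V(Y_i)} E_{x,y}. Then each P_i^x is an orthogonal projection, for fixed x the P_i^x are pairwise orthogonal and sum to the identity, and P_i^x = P_i^{x'} for every arc (x,x') of X; consequently P_i^x is independent of x. -/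
/-- Let `{E x y}` be a quantum homomorphism `X →_q Y` where `X = (α, A)` is a
weakly connected finite directed graph and `Y = (β, B)` is a disjoint union of
components indexed by `Fin t` via the component map `c` (all arcs of `Y` lie
within a single component).  For each `x` and `i` let
`P x i = Σ_{y : c y = i} E x y`.  Then each `P x i` is an orthogonal
projection, for fixed `x` the `P x i` are pairwise orthogonal and sum to the
identity, `P x i = P x' i` for every arc `(x, x')`, and consequently `P x i`
is independent of `x`. -/
theorem component_projections
    {α β : Type*} [Fintype α] [Fintype β]
    {V : Type*} [NormedAddCommGroup V] [InnerProductSpace ℂ V]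
    [FiniteDimensional ℂ V] [Nontrivial V]
    (A : α → α → Prop) (B : β → β → Prop)
    (hconn : ∀ x x' : α, Relation.ReflTransGen (fun a b => A a b ∨ A b a) x x')
    (t : ℕ) (c : β → Fin t)
    (hcomp : ∀ y y', B y y' → c y = c y')
    (E : α → β → Module.End ℂ V)
    (hsa : ∀ x y, LinearMap.IsSymmetric (E x y))
    (hidem : ∀ x y, E x y * E x y = E x y)
    (hsum : ∀ x, ∑ y, E x y = 1)
    (horth : ∀ x y y', y ≠ y' → E x y * E x y' = 0)
    (harc : ∀ x x' y y', A x x' → ¬ B y y' → E x y * E x' y' = 0) :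
    let P : α → Fin t → Module.End ℂ V :=
      fun x i => ∑ y ∈ Finset.univ.filter (fun y => c y = i), E x y
    (∀ x i, LinearMap.IsSymmetric (P x i) ∧ P x i * P x i = P x i) ∧
    (∀ x i j, i ≠ j → P x i * P x j = 0) ∧
    (∀ x, ∑ i, P x i = 1) ∧
    (∀ x x', A x x' → ∀ i, P x i = P x' i) ∧
    (∀ x x' i, P x i = P x' i) := by
  intro P
  have hPdef : ∀ x i, P x i = ∑ y ∈ Finset.univ.filter (fun y => c y = i), E x y :=
    fun _ _ => rfl
  have hcross : ∀ x x', (∀ y y', c y ≠ c y' → E x y * E x' y' = 0) →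
      ∀ i j, i ≠ j → P x i * P x' j = 0 := by
    intro x x' hz i j hij
    rw [hPdef, hPdef, Finset.sum_mul_sum]
    apply Finset.sum_eq_zero
    intro y hy
    apply Finset.sum_eq_zero
    intro y' hy'
    simp only [Finset.mem_filter] at hy hy'
    exact hz y y' (by rw [hy.2, hy'.2]; exact hij)
  have hzsame : ∀ x (y y' : β), c y ≠ c y' → E x y * E x y' = 0 :=
    fun x y y' h => horth x y y' (fun he => h (he ▸ rfl))
  have hsum1 : ∀ x, ∑ i, P x i = 1 := by
    intro x
    simp only [hPdef]
    rw [Finset.sum_fiberwise]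
    exact hsum x
  have hsymP : ∀ x i, LinearMap.IsSymmetric (P x i) := by
    intro x i u v
    rw [hPdef]
    simp only [LinearMap.coe_sum, Finset.sum_apply, sum_inner, inner_sum]
    exact Finset.sum_congr rfl fun y _ => hsa x y u v
  have hidemP : ∀ x i, P x i * P x i = P x i := by
    intro x i
    rw [hPdef, Finset.sum_mul_sum]
    apply Finset.sum_congr rfl
    intro y hy
    rw [Finset.sum_eq_single y]
    · exact hidem x y
    · intro y' _ hne
      exact horth x y y' hne.symm
    · intro h
      exact absurd hy h
  have harcP : ∀ x x', A x x' → ∀ i, P x i = P x' i := by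
    intro x x' hA i
    have hz : ∀ y y', c y ≠ c y' → E x y * E x' y' = 0 :=
      fun y y' h => harc x x' y y' hA (fun hB => h (hcomp y y' hB))
    have h1 : P x i = P x i * P x' i := by
      calc P x i = P x i * ∑ j, P x' j := by rw [hsum1, mul_one]
      _ = ∑ j, P x i * P x' j := Finset.mul_sum _ _ _
      _ = P x i * P x' i := by
          rw [Finset.sum_eq_single i]
          · intro j _ hne
            exact hcross x x' hz i j (Ne.symm hne)
          · intro h
            exact absurd (Finset.mem_univ i) h
    have h2 : P x' i = P x i * P x' i := by
      calc P x' i = (∑ j, P x j) * P x' i := by rw [hsum1, one_mul]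
      _ = ∑ j, P x j * P x' i := Finset.sum_mul _ _ _
      _ = P x i * P x' i := by
          rw [Finset.sum_eq_single i]
          · intro j _ hne
            exact hcross x x' hz j i hne
          · intro h
            exact absurd (Finset.mem_univ i) h
    rw [h1, ← h2]
  refine ⟨fun x i => ⟨hsymP x i, hidemP x i⟩, fun x i j hij => hcross x x (hzsame x) i j hij,
    hsum1, harcP, ?_⟩
  intro x x' i
  induction hconn x x' with
  | refl => rfl
  | tail _ h ih =>
    rcases h with h | h
    · rw [ih, harcP _ _ h i]
    · rw [ih, ← harcP _ _ h i]
end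

section
/- Let D and D' be finite disjoint unions of clockwise directed cycles (each of length at least 2). Then there is a quantum homomorphism D →_q D' if and only if there is a classical homomorphism D → D'. -/
/-- The arc relation of the disjoint union of clockwise directed cycles with
lengths `n 0, …, n (s-1)`: the vertex set is `Σ i, Fin (n i)`, and the arcs go
from each vertex to the next vertex (mod `n i`) of the same cycle. -/
def DUCyclesArc {s : ℕ} (n : Fin s → ℕ) (p q : Σ i, Fin (n i)) : Prop :=
  q.1 = p.1 ∧ (q.2 : ℕ) = ((p.2 : ℕ) + 1) % n p.1

/-- Successor map on a disjoint union of directed cycles. -/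
def DUCsucc {s : ℕ} (n : Fin s → ℕ) (hn : ∀ i, 0 < n i) (p : Σ i, Fin (n i)) :
    Σ i, Fin (n i) :=
  ⟨p.1, ⟨((p.2 : ℕ) + 1) % n p.1, Nat.mod_lt _ (hn p.1)⟩⟩

lemma DUCarc_iff_succ {s : ℕ} (n : Fin s → ℕ) (hn : ∀ i, 0 < n i)
    (p q : Σ i, Fin (n i)) : DUCyclesArc n p q ↔ q = DUCsucc n hn p := by
  constructor
  · rintro ⟨h1, h2⟩
    rcases p with ⟨i, a⟩; rcases q with ⟨j, b⟩
    dsimp at h1; subst h1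
    exact Sigma.ext rfl (heq_of_eq (Fin.ext h2))
  · rintro rfl; exact ⟨rfl, rfl⟩

lemma DUCsucc_iterate {s : ℕ} (n : Fin s → ℕ) (hn : ∀ i, 0 < n i)
    (i : Fin s) (a : Fin (n i)) (k : ℕ) :
    (DUCsucc n hn)^[k] ⟨i, a⟩ = ⟨i, ⟨((a : ℕ) + k) % n i, Nat.mod_lt _ (hn i)⟩⟩ := by
  induction k with
  | zero =>
    simp only [Function.iterate_zero, id_eq]
    exact Sigma.ext rfl (heq_of_eq (Fin.ext (by simp [Nat.mod_eq_of_lt a.isLt])))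
  | succ k ih =>
    rw [Function.iterate_succ_apply', ih]
    refine Sigma.ext rfl (heq_of_eq (Fin.ext ?_))
    show (((a : ℕ) + k) % n i + 1) % n i = ((a : ℕ) + (k + 1)) % n i
    rw [Nat.mod_add_mod, Nat.add_assoc]

/-- Let `D` and `D'` be finite disjoint unions of clockwise directed cycles,
each of length at least `2`.  Then there is a quantum homomorphism `D →_q D'`
if and only if there is a classical homomorphism `D → D'`. -/
theorem duc_qhom_iff_hom
    {s t : ℕ} (n : Fin s → ℕ) (m : Fin t → ℕ)
    (hn : ∀ i, 2 ≤ n i) (hm : ∀ j, 2 ≤ m j) :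
    QHomDi (DUCyclesArc n) (DUCyclesArc m) ↔
      ∃ f : (Σ i, Fin (n i)) → (Σ j, Fin (m j)),
        ∀ p q, DUCyclesArc n p q → DUCyclesArc m (f p) (f q) := by
  have hn' : ∀ i, 0 < n i := fun i => lt_of_lt_of_le two_pos (hn i)
  have hm' : ∀ j, 0 < m j := fun j => lt_of_lt_of_le two_pos (hm j)
  constructor
  · rintro ⟨d, hd, E, hsym, hid, hsum, horth, harc⟩
    -- single step
    have step : ∀ (x : Σ i, Fin (n i)) (y : Σ j, Fin (m j)),
        E x y = E x y * E (DUCsucc n hn' x) (DUCsucc m hm' y) := by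
      intro x y
      have harcx : DUCyclesArc n x (DUCsucc n hn' x) :=
        (DUCarc_iff_succ n hn' _ _).mpr rfl
      calc E x y = E x y * ∑ y', E (DUCsucc n hn' x) y' := by rw [hsum, mul_one]
      _ = ∑ y', E x y * E (DUCsucc n hn' x) y' := by rw [Finset.mul_sum]
      _ = E x y * E (DUCsucc n hn' x) (DUCsucc m hm' y) := by
          apply Fintype.sum_eq_single
          intro b hb
          exact harc _ _ _ _ harcx
            (fun hB => hb ((DUCarc_iff_succ m hm' _ _).mp hB))
    have iter : ∀ (x : Σ i, Fin (n i)) (y : Σ j, Fin (m j)) (k : ℕ),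
        E x y = E x y * E ((DUCsucc n hn')^[k] x) ((DUCsucc m hm')^[k] y) := by
      intro x y k
      induction k with
      | zero => simpa using (hid x y).symm
      | succ k ih =>
        rw [Function.iterate_succ_apply', Function.iterate_succ_apply']
        calc E x y = E x y * E ((DUCsucc n hn')^[k] x) ((DUCsucc m hm')^[k] y) := ih
        _ = E x y * (E ((DUCsucc n hn')^[k] x) ((DUCsucc m hm')^[k] y)
              * E (DUCsucc n hn' ((DUCsucc n hn')^[k] x))
                  (DUCsucc m hm' ((DUCsucc m hm')^[k] y))) := by rw [← step]
        _ = (E x y * E ((DUCsucc n hn')^[k] x) ((DUCsucc m hm')^[k] y))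
              * E (DUCsucc n hn' ((DUCsucc n hn')^[k] x))
                  (DUCsucc m hm' ((DUCsucc m hm')^[k] y)) := (mul_assoc _ _ _).symm
        _ = _ := by rw [← ih]
    have hdvd : ∀ i : Fin s, ∃ j : Fin t, m j ∣ n i := by
      intro i
      set x : Σ i, Fin (n i) := ⟨i, ⟨0, hn' i⟩⟩ with hxdef
      have hx : (DUCsucc n hn')^[n i] x = x := by
        rw [hxdef, DUCsucc_iterate]
        exact Sigma.ext rfl (heq_of_eq (Fin.ext (by simp)))
      obtain ⟨y, hy⟩ : ∃ y, E x y ≠ 0 := by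
        by_contra h
        push_neg at h
        have h1 : (1 : Module.End ℂ (EuclideanSpace ℂ (Fin d))) = 0 := by
          rw [← hsum x]; simp [h]
        have h2 := LinearMap.ext_iff.mp h1
            (EuclideanSpace.single (⟨0, hd⟩ : Fin d) (1 : ℂ))
        simp only [Module.End.one_apply, LinearMap.zero_apply] at h2
        have h3 := congrArg (fun w => w (⟨0, hd⟩ : Fin d)) h2
        simp [EuclideanSpace.single_apply] at h3
      have key := iter x y (n i)
      rw [hx] at key
      have hfix : (DUCsucc m hm')^[n i] y = y := by
        by_contra hne
        exact hy (key.trans (horth x y _ (fun he => hne he.symm)))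
      rcases y with ⟨j, b⟩
      rw [DUCsucc_iterate] at hfix
      have hb : ((b : ℕ) + n i) % m j = (b : ℕ) := by
        have := congrArg (fun p : Σ j, Fin (m j) => (p.2 : ℕ)) hfix
        simpa using this
      refine ⟨j, ?_⟩
      have hmod : (b : ℕ) + n i ≡ (b : ℕ) + 0 [MOD m j] := by
        show ((b : ℕ) + n i) % m j = ((b : ℕ) + 0) % m j
        rw [hb, Nat.add_zero, Nat.mod_eq_of_lt b.isLt]
      exact (Nat.modEq_zero_iff_dvd).mp (Nat.ModEq.add_left_cancel' _ hmod)
    choose g hg using hdvd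
    refine ⟨fun p => ⟨g p.1, ⟨(p.2 : ℕ) % m (g p.1), Nat.mod_lt _ (hm' _)⟩⟩, ?_⟩
    rintro ⟨i, a⟩ ⟨i', b⟩ ⟨h1, h2⟩
    dsimp at h1; subst h1
    refine ⟨rfl, ?_⟩
    dsimp at h2 ⊢
    rw [h2, Nat.mod_mod_of_dvd _ (hg _), Nat.mod_add_mod]
  · rintro ⟨f, hf⟩
    refine ⟨1, one_pos, fun x y => if y = f x then 1 else 0, ?_, ?_, ?_, ?_, ?_⟩
    · intro x y u v
      by_cases h : y = f x <;> simp [h]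
    · intro x y; by_cases h : y = f x <;> simp [h]
    · intro x
      exact Fintype.sum_ite_eq' (f x)
        (fun _ => (1 : Module.End ℂ (EuclideanSpace ℂ (Fin 1))))
    · intro x y y' hne
      by_cases h : y = f x
      · by_cases h' : y' = f x
        · exact absurd (h.trans h'.symm) hne
        · simp [h, h']
      · simp [h]
    · intro x x' y y' hA hB
      by_cases h : y = f x
      · by_cases h' : y' = f x'
        · exact absurd (h ▸ h' ▸ hf x x' hA) hB
        · simp [h, h']
      · simp [h]
end

section
/- Let A₀,...,A₄ and B₀,...,B₄ be orthogonal projections on a finite-dimensional Hilbert space with A_i B_i = B_i A_i = 0 for each i (indices mod 5), and let P be an orthogonal projection such that (A_i + B_i)P = P for every i, A_i A_{i+1} = 0 and B_i B_{i+1} = 0 for every i (mod 5). Then P = 0. -/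
/-!
With `Sᵢ = Aᵢ - Bᵢ` and `Cᵢ = Aᵢ + Bᵢ`, orthogonality gives `Sᵢ² = Cᵢ` and `Sᵢ Sᵢ₊₁ = -Cᵢ Cᵢ₊₁`,
so every vector `x` fixed by all `Cᵢ` satisfies `Sᵢ² x = x` and `Sᵢ Sᵢ₊₁ x = -x`. For self-adjoint
`Sᵢ` this forces `‖Sᵢ x + Sᵢ₊₁ x‖ = 0`, i.e. the vectors `Sᵢ x` alternate in sign around the cycle;
around an odd cycle they must vanish, and then `x = Sᵢ² x = 0`.
-/

section Ring

variable {R : Type*} [Ring R] {a b a' b' : R}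

theorem sub_mul_self_eq_add_of_mul_eq_zero (ha : IsIdempotentElem a) (hb : IsIdempotentElem b)
    (hab : a * b = 0) (hba : b * a = 0) : (a - b) * (a - b) = a + b := by
  rw [sub_mul, mul_sub, mul_sub, ha.eq, hb.eq, hab, hba]
  abel

theorem sub_mul_sub_eq_neg_add_mul_add (haa : a * a' = 0) (hbb : b * b' = 0) :
    (a - b) * (a' - b') = -((a + b) * (a' + b')) := by
  simp only [sub_mul, mul_sub, add_mul, mul_add, haa, hbb]
  abel

end Ring

theorem eq_zero_of_odd_of_add_one_eq_neg {G : Type*} [AddGroup G] [IsAddTorsionFree G] {n : ℕ}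
    (hn : Odd n) {v : ZMod n → G} (hv : ∀ i, v (i + 1) = -v i) : v 0 = 0 := by
  have hpow : ∀ k : ℕ, v k = ((-1 : ℤ) ^ k) • v 0 := by
    intro k
    induction k with
    | zero => simp
    | succ k ih => rw [Nat.cast_succ, hv, ih, pow_succ, mul_neg_one, neg_zsmul]
  have := hpow n
  rw [ZMod.natCast_self, hn.neg_one_pow, neg_one_zsmul] at this
  exact self_eq_neg.mp this

section InnerProductSpace

variable {𝕜 E : Type*} [RCLike 𝕜] [NormedAddCommGroup E] [InnerProductSpace 𝕜 E]

theorem LinearMap.IsSymmetric.apply_eq_neg_of_apply_apply {S T : E →ₗ[𝕜] E}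
    (hS : S.IsSymmetric) (hT : T.IsSymmetric) {x : E} (hSS : S (S x) = x) (hTT : T (T x) = x)
    (hST : S (T x) = -x) : T x = -S x := by
  have hSn : ‖S x‖ ^ 2 = RCLike.re (inner 𝕜 x x) := by
    rw [@norm_sq_eq_re_inner 𝕜, hS, hSS]
  have hTn : ‖T x‖ ^ 2 = RCLike.re (inner 𝕜 x x) := by
    rw [@norm_sq_eq_re_inner 𝕜, hT, hTT]
  have hST' : RCLike.re (inner 𝕜 (S x) (T x)) = -RCLike.re (inner 𝕜 x x) := by
    rw [hS, hST, inner_neg_right, map_neg]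
  have hsum : ‖S x + T x‖ ^ 2 = 0 := by
    rw [@norm_add_sq 𝕜, hSn, hTn, hST']
    ring
  exact eq_neg_of_add_eq_zero_right (norm_eq_zero.mp (pow_eq_zero_iff two_ne_zero |>.mp hsum))

theorem eq_zero_of_forall_add_apply_eq_self {n : ℕ} (hn : Odd n) {A B : ZMod n → E →ₗ[𝕜] E}
    (hAsa : ∀ i, (A i).IsSymmetric) (hAidem : ∀ i, IsIdempotentElem (A i))
    (hBsa : ∀ i, (B i).IsSymmetric) (hBidem : ∀ i, IsIdempotentElem (B i))
    (hAB : ∀ i, A i * B i = 0) (hBA : ∀ i, B i * A i = 0)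
    (hAA : ∀ i, A i * A (i + 1) = 0) (hBB : ∀ i, B i * B (i + 1) = 0)
    {x : E} (hx : ∀ i, (A i + B i) x = x) : x = 0 := by
  set S : ZMod n → E →ₗ[𝕜] E := fun i => A i - B i
  have hSS : ∀ i, S i (S i x) = x := fun i => by
    rw [← Module.End.mul_apply, sub_mul_self_eq_add_of_mul_eq_zero (hAidem i) (hBidem i) (hAB i)
      (hBA i), hx]
  have hSS_succ : ∀ i, S i (S (i + 1) x) = -x := fun i => by
    rw [← Module.End.mul_apply, sub_mul_sub_eq_neg_add_mul_add (hAA i) (hBB i),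
      LinearMap.neg_apply, Module.End.mul_apply, hx, hx]
  have hS_succ : ∀ i, S (i + 1) x = -S i x := fun i =>
    ((hAsa i).sub (hBsa i)).apply_eq_neg_of_apply_apply ((hAsa (i + 1)).sub (hBsa (i + 1)))
      (hSS i) (hSS (i + 1)) (hSS_succ i)
  have := IsAddTorsionFree.of_isTorsionFree 𝕜 E
  rw [← hSS 0, eq_zero_of_odd_of_add_one_eq_neg hn (v := fun i => S i x) hS_succ, map_zero]

end InnerProductSpace

theorem five_cycle_localization_general
    {V : Type*} [NormedAddCommGroup V] [InnerProductSpace ℂ V]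
    (A B : ZMod 5 → Module.End ℂ V) (P : Module.End ℂ V)
    (hAsa : ∀ i, LinearMap.IsSymmetric (A i))
    (hAidem : ∀ i, A i * A i = A i)
    (hBsa : ∀ i, LinearMap.IsSymmetric (B i))
    (hBidem : ∀ i, B i * B i = B i)
    (hAB : ∀ i, A i * B i = 0)
    (hBA : ∀ i, B i * A i = 0)
    (hCP : ∀ i, (A i + B i) * P = P)
    (hAA : ∀ i, A i * A (i + 1) = 0)
    (hBB : ∀ i, B i * B (i + 1) = 0) :
    P = 0 := by
  ext x
  exact eq_zero_of_forall_add_apply_eq_self (by decide) hAsa hAidem hBsa hBidem hAB hBA hAA hBB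
    fun i => LinearMap.congr_fun (hCP i) x

/-- **Quantum 5-cycle localization (operator core of the A-gadget lemma).**
Let `A₀, …, A₄`, `B₀, …, B₄` and `P` be orthogonal projections (self-adjoint
idempotents) on a finite-dimensional complex Hilbert space, with indices mod 5,
such that `Aᵢ Bᵢ = Bᵢ Aᵢ = 0`, `(Aᵢ + Bᵢ) P = P`, `Aᵢ Aᵢ₊₁ = 0` and
`Bᵢ Bᵢ₊₁ = 0` for every `i`.  Then `P = 0`. -/
theorem five_cycle_localization
    {V : Type*} [NormedAddCommGroup V] [InnerProductSpace ℂ V]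
    [FiniteDimensional ℂ V]
    (A B : ZMod 5 → Module.End ℂ V) (P : Module.End ℂ V)
    (hAsa : ∀ i, LinearMap.IsSymmetric (A i))
    (hAidem : ∀ i, A i * A i = A i)
    (hBsa : ∀ i, LinearMap.IsSymmetric (B i))
    (hBidem : ∀ i, B i * B i = B i)
    (hPsa : LinearMap.IsSymmetric P)
    (hPidem : P * P = P)
    (hAB : ∀ i, A i * B i = 0)
    (hBA : ∀ i, B i * A i = 0)
    (hCP : ∀ i, (A i + B i) * P = P)
    (hAA : ∀ i, A i * A (i + 1) = 0)
    (hBB : ∀ i, B i * B (i + 1) = 0) :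
    P = 0 :=
  five_cycle_localization_general A B P hAsa hAidem hBsa hBidem hAB hBA hCP hAA hBB
end

section
/- Let {E_{x,y}} be a quantum homomorphism X →_q Y. Suppose x has two adjacent neighbors x₁, x₂ in X (so xx₁, xx₂, x₁x₂ are all edges), and suppose S ⊆ V(Y) is a set such that E_{x₁,z} = 0 and E_{x₂,z} = 0 for all z ∉ S, and such that S ∩ N_Y(y) contains no edge of Y. Then E_{x,y} = 0. -/
/-! Write `P = E x y`. Inserting `∑_z E x₁ z = 1` and `∑_z' E x₂ z' = 1` gives
`P = P² = ∑_{z,z'} P · E x₁ z · E x₂ z' · P`, and every term vanishes: unless `z, z' ∈ S`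
both lie in `N_Y(y)`, the outer factor adjacent to the culprit kills it (for the right-hand
pair use the symmetry of both adjacency relations); otherwise `z z'` is not an edge of `Y`
while `x₁ x₂` is one of `X`, so the middle pair kills it. -/

lemma IsIdempotentElem.eq_zero_of_sandwich_eq_zero {R ι κ : Type*} [Semiring R]
    [Fintype ι] [Fintype κ] {p : R} (hp : IsIdempotentElem p) {a : ι → R} {b : κ → R}
    (ha : ∑ i, a i = 1) (hb : ∑ j, b j = 1) (h : ∀ i j, p * a i * b j * p = 0) :
    p = 0 :=
  calc p = p * (∑ i, a i) * (∑ j, b j) * p := by rw [ha, hb, mul_one, mul_one, hp.eq]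
    _ = ∑ i, ∑ j, p * a i * b j * p := by
      simp only [Finset.mul_sum, Finset.sum_mul]
      exact Finset.sum_comm
    _ = 0 := Finset.sum_eq_zero fun i _ => Finset.sum_eq_zero fun j _ => h i j

theorem gadget_localization_general
    {α β : Type*} [Fintype β]
    {V : Type*} [NormedAddCommGroup V] [InnerProductSpace ℂ V]
    (X : SimpleGraph α) (Y : SimpleGraph β)
    (E : α → β → Module.End ℂ V)
    (hidem : ∀ x y, E x y * E x y = E x y)
    (hsum : ∀ x, ∑ y, E x y = 1)
    (hedge : ∀ x x' y y', X.Adj x x' → ¬ Y.Adj y y' → E x y * E x' y' = 0)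
    (x x₁ x₂ : α) (y : β)
    (h₁ : X.Adj x x₁) (h₂ : X.Adj x x₂) (h₁₂ : X.Adj x₁ x₂)
    (S : Set β)
    (hS₁ : ∀ z ∉ S, E x₁ z = 0)
    (hS₂ : ∀ z ∉ S, E x₂ z = 0)
    (hSedge : ∀ z ∈ S, ∀ z' ∈ S, Y.Adj y z → Y.Adj y z' → ¬ Y.Adj z z') :
    E x y = 0 := by
  refine IsIdempotentElem.eq_zero_of_sandwich_eq_zero (hidem x y) (hsum x₁) (hsum x₂)
    fun z z' => ?_
  by_cases hz : z ∈ S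
  swap
  · rw [hS₁ z hz, mul_zero, zero_mul, zero_mul]
  by_cases hz' : z' ∈ S
  swap
  · rw [hS₂ z' hz', mul_zero, zero_mul]
  by_cases hyz : Y.Adj y z
  swap
  · rw [hedge x x₁ y z h₁ hyz, zero_mul, zero_mul]
  by_cases hyz' : Y.Adj y z'
  · rw [mul_assoc (E x y), hedge x₁ x₂ z z' h₁₂ (hSedge z hz z' hz' hyz hyz'), mul_zero, zero_mul]
  · rw [mul_assoc, hedge x₂ x z' y h₂.symm (fun h => hyz' h.symm), mul_zero]

/-- Let `{E x y}` be a quantum homomorphism `X →_q Y`.  Suppose `x` has two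
adjacent neighbors `x₁, x₂` in `X` (so `x x₁`, `x x₂`, `x₁ x₂` are all edges),
and `S ⊆ V(Y)` is a set such that `E x₁ z = 0` and `E x₂ z = 0` for all
`z ∉ S`, and such that `S ∩ N_Y(y)` contains no edge of `Y`.
Then `E x y = 0`. -/
theorem gadget_localization
    {α β : Type*} [Fintype α] [Fintype β]
    {V : Type*} [NormedAddCommGroup V] [InnerProductSpace ℂ V]
    [FiniteDimensional ℂ V] [Nontrivial V]
    (X : SimpleGraph α) (Y : SimpleGraph β)
    (E : α → β → Module.End ℂ V)
    (hsa : ∀ x y, LinearMap.IsSymmetric (E x y))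
    (hidem : ∀ x y, E x y * E x y = E x y)
    (hsum : ∀ x, ∑ y, E x y = 1)
    (horth : ∀ x y y', y ≠ y' → E x y * E x y' = 0)
    (hedge : ∀ x x' y y', X.Adj x x' → ¬ Y.Adj y y' → E x y * E x' y' = 0)
    (x x₁ x₂ : α) (y : β)
    (h₁ : X.Adj x x₁) (h₂ : X.Adj x x₂) (h₁₂ : X.Adj x₁ x₂)
    (S : Set β)
    (hS₁ : ∀ z ∉ S, E x₁ z = 0)
    (hS₂ : ∀ z ∉ S, E x₂ z = 0)
    (hSedge : ∀ z ∈ S, ∀ z' ∈ S, Y.Adj y z → Y.Adj y z' → ¬ Y.Adj z z') :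
    E x y = 0 :=
  gadget_localization_general X Y E hidem hsum hedge x x₁ x₂ y h₁ h₂ h₁₂ S hS₁ hS₂ hSedge
end

section
/- Let n ≥ 2 and let {E_{u,v}} be a quantum homomorphism from the directed cycle C⃗_n to a directed graph Y. For every vertex u of C⃗_n there exists a vertex v of Y with E_{u,v} ≠ 0, and for any such v, Y contains a directed closed walk of length n from v to v. -/
theorem exists_mul_ne_zero_and_mul_ne_zero_of_sum_eq_one {R β : Type*} [Semiring R]
    [Fintype β] {P : β → R} (hP : ∑ b, P b = 1) {a y : R} (hay : a * y ≠ 0) :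
    ∃ b, a * P b ≠ 0 ∧ P b * y ≠ 0 := by
  have hsum : ∑ b, a * P b * y ≠ 0 := by
    rwa [← Finset.sum_mul, ← Finset.mul_sum, hP, mul_one]
  obtain ⟨b, -, hb⟩ := Finset.exists_ne_zero_of_sum_ne_zero hsum
  refine ⟨b, fun h => hb (by rw [h, zero_mul]), fun h => hb (by rw [mul_assoc, h, mul_zero])⟩

theorem exists_seq_of_forall_exists {β : Type*} {p : ℕ → β → Prop} {r : β → β → Prop}
    (hstep : ∀ k b, p k b → ∃ b', r b b' ∧ p (k + 1) b') {v : β} (hv : p 0 v) :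
    ∃ w : ℕ → β, w 0 = v ∧ ∀ i, r (w i) (w (i + 1)) ∧ p i (w i) := by
  choose! next hnext using hstep
  let w : ℕ → β := fun k => Nat.rec v next k
  have hw : ∀ i, p i (w i) := fun i => by
    induction i with
    | zero => exact hv
    | succ k ih => exact (hnext k _ ih).2
  exact ⟨w, rfl, fun i => ⟨(hnext i _ (hw i)).1, hw i⟩⟩

theorem exists_walk_of_sum_eq_one {R β : Type*} [Semiring R] [Fintype β]
    {P : ℕ → β → R} (hP : ∀ k, ∑ b, P k b = 1) {B : β → β → Prop}
    (hB : ∀ k b b', ¬ B b b' → P k b * P (k + 1) b' = 0) {y : R} {v : β}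
    (hv : P 0 v * y ≠ 0) :
    ∃ w : ℕ → β, w 0 = v ∧ ∀ i, B (w i) (w (i + 1)) ∧ P i (w i) * y ≠ 0 := by
  refine exists_seq_of_forall_exists (p := fun k b => P k b * y ≠ 0) (fun k b hb => ?_) hv
  obtain ⟨b', hbb', hb'y⟩ := exists_mul_ne_zero_and_mul_ne_zero_of_sum_eq_one (hP (k + 1)) hb
  exact ⟨b', not_not.mp fun h => hbb' (hB k b b' h), hb'y⟩

theorem cycleArc_add_one {n : ℕ} [NeZero n] (u : Fin n) : CycleArc n u (u + 1) := by
  rw [CycleArc, Fin.val_add, Fin.val_one', Nat.add_mod_mod]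

section

open Fin.NatCast

theorem exists_closed_walk_of_cycle_hom {R β : Type*} [Semiring R] [Fintype β] {n : ℕ}
    {B : β → β → Prop} {E : Fin n → β → R}
    (hidem : ∀ u v, E u v * E u v = E u v)
    (hsum : ∀ u, ∑ v, E u v = 1)
    (horth : ∀ u v v', v ≠ v' → E u v * E u v' = 0)
    (harc : ∀ u u' v v', CycleArc n u u' → ¬ B v v' → E u v * E u' v' = 0)
    {u : Fin n} {v : β} (hv : E u v ≠ 0) :
    ∃ w : ℕ → β, w 0 = v ∧ w n = v ∧ ∀ i < n, B (w i) (w (i + 1)) := by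
  have : NeZero n := ⟨u.pos.ne'⟩
  have hB : ∀ (k : ℕ) b b', ¬ B b b' → E (u + k) b * E (u + (k + 1 : ℕ)) b' = 0 := by
    intro k b b' h
    refine harc _ _ b b' ?_ h
    simpa [add_assoc] using cycleArc_add_one (u + (k : Fin n))
  obtain ⟨w, hw0, hw⟩ := exists_walk_of_sum_eq_one (fun k : ℕ => hsum (u + k)) hB
    (y := E u v) (v := v) (by simpa [hidem] using hv)
  refine ⟨w, hw0, ?_, fun i _ => (hw i).1⟩
  by_contra hne
  exact (hw n).2 (by simpa using horth u _ _ hne)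

end

theorem cycle_quantum_hom_closed_walk_general
    {β : Type*} [Fintype β]
    {V : Type*} [NormedAddCommGroup V] [InnerProductSpace ℂ V]
    [Nontrivial V]
    (n : ℕ) (B : β → β → Prop)
    (E : Fin n → β → Module.End ℂ V)
    (hidem : ∀ u v, E u v * E u v = E u v)
    (hsum : ∀ u, ∑ v, E u v = 1)
    (horth : ∀ u v v', v ≠ v' → E u v * E u v' = 0)
    (harc : ∀ u u' v v', CycleArc n u u' → ¬ B v v' → E u v * E u' v' = 0) :
    ∀ u : Fin n,
      (∃ v : β, E u v ≠ 0) ∧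
      ∀ v : β, E u v ≠ 0 →
        ∃ w : ℕ → β, w 0 = v ∧ w n = v ∧ ∀ i < n, B (w i) (w (i + 1)) := by
  intro u
  refine ⟨?_, fun v hv => exists_closed_walk_of_cycle_hom hidem hsum horth harc hv⟩
  obtain ⟨v, -, hv⟩ := Finset.exists_ne_zero_of_sum_ne_zero ((hsum u).symm ▸ one_ne_zero)
  exact ⟨v, hv⟩

/-- Let `n ≥ 2` and let `{E u v}` be a quantum homomorphism from the directed
cycle `C⃗_n` to a finite directed graph `Y = (β, B)`.  Then for every vertex
`u` of `C⃗_n` there exists `v` with `E u v ≠ 0`, and for any such `v` the graph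
`Y` contains a directed closed walk of length `n` from `v` to `v`. -/
theorem cycle_quantum_hom_closed_walk
    {β : Type*} [Fintype β]
    {V : Type*} [NormedAddCommGroup V] [InnerProductSpace ℂ V]
    [FiniteDimensional ℂ V] [Nontrivial V]
    (n : ℕ) (hn : 2 ≤ n) (B : β → β → Prop)
    (E : Fin n → β → Module.End ℂ V)
    (hsa : ∀ u v, LinearMap.IsSymmetric (E u v))
    (hidem : ∀ u v, E u v * E u v = E u v)
    (hsum : ∀ u, ∑ v, E u v = 1)
    (horth : ∀ u v v', v ≠ v' → E u v * E u v' = 0)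
    (harc : ∀ u u' v v', CycleArc n u u' → ¬ B v v' → E u v * E u' v' = 0) :
    ∀ u : Fin n,
      (∃ v : β, E u v ≠ 0) ∧
      ∀ v : β, E u v ≠ 0 →
        ∃ w : ℕ → β, w 0 = v ∧ w n = v ∧ ∀ i < n, B (w i) (w (i + 1)) :=
  cycle_quantum_hom_closed_walk_general n B E hidem hsum horth harc
end
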